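/- arXiv:2006.13333 — 3 statements merged into one kernel-verified Lean document; each statement's English description precedes it below -/
import Mathlib

section
/- Let 0 < λ₁ < λ₂ < … < λ_r be real numbers and let t₁ < t₂ < … < t_r be nonnegative integers. Then the generalized Vandermonde matrix V ∈ ℝ^{r×r} with entries V_{ij} = λ_i^{t_j} has positive determinant: det V > 0. -/
open Matrix

open Polynomial Finset in
/-- A nonzero real polynomial with `k` nonzero terms has fewer than `k` distinct
positive roots. -/
private lemma gv_card_lt_support_card :
    ∀ n : ℕ, ∀ (f : ℝ[X]) (S : Finset ℝ), S.card = n → f ≠ 0 →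
      (∀ x ∈ S, 0 < x ∧ Polynomial.eval x f = 0) → S.card < f.support.card := by
  intro n
  induction n using Nat.strong_induction_on with
  | _ n IH =>
    intro f S hcard hf hroots
    rcases Nat.eq_zero_or_pos n with rfl | hn
    · rw [hcard]
      exact Finset.card_pos.mpr (nonempty_support_iff.mpr hf)
    -- factor out the trailing power of X
    set m := f.natTrailingDegree with hm
    obtain ⟨g, hg⟩ : (X : ℝ[X]) ^ m ∣ f :=
      X_pow_dvd_iff.mpr fun d hd => coeff_eq_zero_of_lt_natTrailingDegree hd
    have hg0 : g ≠ 0 := by rintro rfl; simp at hg; exact hf hg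
    have hgc0 : g.coeff 0 ≠ 0 := by
      have h1 : f.coeff m = g.coeff 0 := by
        rw [hg]
        simpa using coeff_X_pow_mul g m 0
      have h2 : f.coeff m ≠ 0 := trailingCoeff_nonzero_iff_nonzero.mpr hf
      rwa [h1] at h2
    have h0mem : (0 : ℕ) ∈ g.support := mem_support_iff.mpr hgc0
    -- supports have the same cardinality
    have hsupp : f.support = g.support.image (· + m) := by
      rw [hg]
      ext k
      simp only [mem_support_iff, Finset.mem_image, coeff_X_pow_mul']
      constructor
      · intro h
        have hmk : m ≤ k := by by_contra h'; simp [h'] at h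
        exact ⟨k - m, by simpa [hmk] using h, by omega⟩
      · rintro ⟨d, hd, rfl⟩
        simpa using hd
    have hcardsupp : f.support.card = g.support.card := by
      rw [hsupp]
      exact Finset.card_image_of_injective _ (add_left_injective m)
    -- roots of g
    have hgroots : ∀ x ∈ S, 0 < x ∧ Polynomial.eval x g = 0 := by
      intro x hx
      obtain ⟨hx0, hxr⟩ := hroots x hx
      refine ⟨hx0, ?_⟩
      rw [hg] at hxr
      simp only [eval_mul, eval_pow, eval_X] at hxr
      have : x ^ m ≠ 0 := pow_ne_zero _ hx0.ne'
      exact (mul_eq_zero.mp hxr).resolve_left this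
    -- g is nonconstant, so its derivative is nonzero
    have hSne : S.Nonempty := Finset.card_pos.mp (hcard ▸ hn)
    obtain ⟨x₀, hx₀⟩ := hSne
    have hgd : g.natDegree ≠ 0 := by
      intro h
      have hC : g = C (g.coeff 0) := eq_C_of_natDegree_eq_zero h
      have h0 := (hgroots x₀ hx₀).2
      rw [hC] at h0
      simp at h0
      exact hg0 (by rw [hC, h0]; simp)
    have hg' : Polynomial.derivative g ≠ 0 := by
      intro h
      exact hgd (natDegree_eq_zero_of_derivative_eq_zero h)
    -- support of derivative is smaller
    have hsupp' : (Polynomial.derivative g).support.card + 1 ≤ g.support.card := by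
      have hinj : ∀ a ∈ (Polynomial.derivative g).support,
          a + 1 ∈ g.support.erase 0 := by
        intro a ha
        rw [mem_support_iff, coeff_derivative] at ha
        have : g.coeff (a + 1) ≠ 0 := fun h => ha (by simp [h])
        simp [Finset.mem_erase, mem_support_iff, this]
      have hle := Finset.card_le_card_of_injOn (fun a => a + 1) hinj
        (fun a _ b _ h => by simpa using h)
      have herase : (g.support.erase 0).card = g.support.card - 1 :=
        Finset.card_erase_of_mem h0mem
      have hpos' : 0 < g.support.card := Finset.card_pos.mpr ⟨0, h0mem⟩
      omega
    -- Rolle: build n - 1 positive roots of the derivative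
    obtain ⟨k, rfl⟩ : ∃ k, n = k + 1 := ⟨n - 1, by omega⟩
    have e := S.orderIsoOfFin hcard
    have key : ∀ i : Fin k, ∃ y,
        (e ⟨i, by omega⟩ : ℝ) < y ∧ y < (e ⟨i + 1, by omega⟩ : ℝ) ∧
        Polynomial.eval y (Polynomial.derivative g) = 0 := by
      intro i
      have hab : (e ⟨i, by omega⟩ : ℝ) < (e ⟨i + 1, by omega⟩ : ℝ) := by
        exact_mod_cast e.strictMono (by simp [Fin.lt_def])
      have heq : Polynomial.eval ((e ⟨i, by omega⟩ : ℝ)) g =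
          Polynomial.eval ((e ⟨i + 1, by omega⟩ : ℝ)) g := by
        rw [(hgroots _ (e ⟨i, by omega⟩).2).2, (hgroots _ (e ⟨i + 1, by omega⟩).2).2]
      obtain ⟨y, hy, hy'⟩ := exists_deriv_eq_zero hab
        (g.continuous.continuousOn) heq
      refine ⟨y, hy.1, hy.2, ?_⟩
      rw [← (g.hasDerivAt y).deriv]
      exact hy'
    choose c hc1 hc2 hc3 using key
    have hcmono : ∀ i j : Fin k, i < j → c i < c j := by
      intro i j hij
      have hij' : (i : ℕ) < (j : ℕ) := hij
      calc c i < (e ⟨i + 1, by omega⟩ : ℝ) := hc2 i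
        _ ≤ (e ⟨j, by omega⟩ : ℝ) := by
            exact_mod_cast e.monotone (by simp [Fin.le_def]; omega)
        _ < c j := hc1 j
    have hcinj : Function.Injective c := by
      intro i j h
      rcases lt_trichotomy i j with h' | h' | h'
      · exact absurd h (hcmono i j h').ne
      · exact h'
      · exact absurd h.symm (hcmono j i h').ne
    have hTcard : (Finset.image c Finset.univ).card = k := by
      rw [Finset.card_image_of_injective _ hcinj, Finset.card_univ, Fintype.card_fin]
    have hTroots : ∀ x ∈ Finset.image c Finset.univ,
        0 < x ∧ Polynomial.eval x (Polynomial.derivative g) = 0 := by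
      intro x hx
      rw [Finset.mem_image] at hx
      obtain ⟨i, _, rfl⟩ := hx
      refine ⟨?_, hc3 i⟩
      exact ((hgroots _ (e ⟨i, by omega⟩).2).1).trans (hc1 i)
    have hIH := IH k (by omega) (Polynomial.derivative g) _ hTcard hg' hTroots
    omega

open Polynomial Finset in
/-- The generalized Vandermonde matrix is nonsingular. -/
private lemma gv_det_ne_zero
    {r : ℕ} (lam : Fin r → ℝ) (hpos : ∀ i, 0 < lam i) (hlam : StrictMono lam)
    (t : Fin r → ℕ) (ht : StrictMono t) :
    (Matrix.of fun i j : Fin r => lam i ^ t j).det ≠ 0 := by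
  intro hdet
  obtain ⟨v, hv, hmv⟩ := (Matrix.exists_mulVec_eq_zero_iff).mpr hdet
  set f : ℝ[X] := ∑ j, C (v j) * X ^ t j with hf
  obtain ⟨j₀, hj₀⟩ := Function.ne_iff.mp hv
  have hcoeff : ∀ j, f.coeff (t j) = v j := by
    intro j
    rw [hf, finset_sum_coeff]
    rw [Finset.sum_eq_single j]
    · simp
    · intro b _ hb
      have : t b ≠ t j := fun h => hb (ht.injective h)
      simp [coeff_C_mul, coeff_X_pow, this.symm]
    · simp
  have hfne : f ≠ 0 := fun h => hj₀ (by rw [← hcoeff j₀, h]; simp)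
  have hsupp : f.support ⊆ Finset.image t Finset.univ := by
    intro a ha
    rw [mem_support_iff] at ha
    rw [hf, finset_sum_coeff] at ha
    by_contra hnot
    apply ha
    apply Finset.sum_eq_zero
    intro j _
    have : a ≠ t j := fun h => hnot (h ▸ Finset.mem_image_of_mem t (Finset.mem_univ j))
    simp [coeff_C_mul, coeff_X_pow, this]
  have hsuppcard : f.support.card ≤ r := by
    calc f.support.card ≤ (Finset.image t Finset.univ).card := Finset.card_le_card hsupp
      _ ≤ Finset.univ.card := Finset.card_image_le
      _ = r := by simp
  have hroots : ∀ x ∈ Finset.image lam Finset.univ, 0 < x ∧ Polynomial.eval x f = 0 := by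
    intro x hx
    obtain ⟨i, _, rfl⟩ := Finset.mem_image.mp hx
    refine ⟨hpos i, ?_⟩
    have hmvi := congrFun hmv i
    simp only [Matrix.mulVec, dotProduct, Matrix.of_apply, Pi.zero_apply] at hmvi
    rw [hf]
    simp only [eval_finset_sum, eval_mul, eval_C, eval_pow, eval_X]
    rw [← hmvi]
    exact Finset.sum_congr rfl fun j _ => mul_comm _ _
  have hScard : (Finset.image lam Finset.univ).card = r := by
    rw [Finset.card_image_of_injective _ hlam.injective, Finset.card_univ, Fintype.card_fin]
  have := gv_card_lt_support_card r f (Finset.image lam Finset.univ) hScard hfne hroots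
  omega

/-- The generalized Vandermonde matrix built from positive reals
`0 < lam 0 < lam 1 < … < lam (r-1)` and strictly increasing natural exponents
`t 0 < t 1 < … < t (r-1)` has positive determinant. -/
theorem generalized_vandermonde_det_pos
    {r : ℕ} (lam : Fin r → ℝ) (hpos : ∀ i, 0 < lam i) (hlam : StrictMono lam)
    (t : Fin r → ℕ) (ht : StrictMono t) :
    0 < (Matrix.of fun i j : Fin r => lam i ^ t j).det := by
  have convex_pos : ∀ {s a b : ℝ}, 0 ≤ s → s ≤ 1 → 0 < a → 0 < b →
      0 < (1 - s) * a + s * b := by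
    intro s a b h0 h1 ha hb
    rcases lt_or_ge s 1 with h | h
    · nlinarith [mul_pos (show (0:ℝ) < 1 - s by linarith) ha, mul_nonneg h0 hb.le]
    · have hs1 : s = 1 := le_antisymm h1 h
      subst hs1
      nlinarith
  let F : ℝ → ℝ := fun s =>
    (Matrix.of fun i j : Fin r => ((1 - s) * lam i + s * 2 ^ ((i : ℕ) + 1)) ^ t j).det
  have hFne : ∀ s ∈ Set.Icc (0:ℝ) 1, F s ≠ 0 := by
    intro s hs
    exact gv_det_ne_zero _
      (fun i => convex_pos hs.1 hs.2 (hpos i) (by positivity))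
      (fun i j hij => by
        have h1 := hlam hij
        have h2 : (2:ℝ) ^ ((i:ℕ)+1) < 2 ^ ((j:ℕ)+1) := by
          apply pow_lt_pow_right₀ one_lt_two
          have : (i:ℕ) < (j:ℕ) := hij
          omega
        have h3 := convex_pos hs.1 hs.2 (sub_pos.mpr h1) (sub_pos.mpr h2)
        show (1 - s) * lam i + s * 2 ^ ((i : ℕ) + 1) <
          (1 - s) * lam j + s * 2 ^ ((j : ℕ) + 1)
        nlinarith) t ht
  have hFcont : Continuous F := by
    apply Continuous.matrix_det
    apply continuous_matrix
    intro i j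
    apply Continuous.pow
    fun_prop
  have hF1 : 0 < F 1 := by
    show 0 < (Matrix.of fun i j : Fin r =>
      ((1 - (1:ℝ)) * lam i + 1 * 2 ^ ((i : ℕ) + 1)) ^ t j).det
    have hentry : (Matrix.of fun i j : Fin r =>
        ((1 - (1:ℝ)) * lam i + 1 * 2 ^ ((i : ℕ) + 1)) ^ t j)
        = Matrix.of fun i j : Fin r => ((2:ℝ) ^ t j) ^ ((i : ℕ) + 1) := by
      ext i j
      simp only [Matrix.of_apply]
      rw [show (1 - (1:ℝ)) * lam i + 1 * 2 ^ ((i : ℕ) + 1) = 2 ^ ((i : ℕ) + 1) by ring]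
      rw [← pow_mul, ← pow_mul, Nat.mul_comm]
    rw [hentry, ← Matrix.det_transpose]
    have htr : (Matrix.of fun i j : Fin r => ((2:ℝ) ^ t j) ^ ((i : ℕ) + 1)).transpose
        = Matrix.of fun i j : Fin r =>
            ((2:ℝ) ^ t i) * Matrix.vandermonde (fun j : Fin r => (2:ℝ) ^ t j) i j := by
      ext i j
      simp [Matrix.vandermonde, pow_succ, mul_comm]
    rw [htr, Matrix.det_mul_column, Matrix.det_vandermonde]
    apply mul_pos
    · exact Finset.prod_pos fun j _ => by positivity
    · apply Finset.prod_pos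
      intro i _
      apply Finset.prod_pos
      intro j hj
      rw [Finset.mem_Ioi] at hj
      exact sub_pos.mpr (pow_lt_pow_right₀ one_lt_two (ht hj))
  have hF0eq : F 0 = (Matrix.of fun i j : Fin r => lam i ^ t j).det := by
    show (Matrix.of fun i j : Fin r =>
      ((1 - (0:ℝ)) * lam i + 0 * 2 ^ ((i : ℕ) + 1)) ^ t j).det = _
    congr 1
    ext i j
    simp only [Matrix.of_apply]
    rw [show (1 - (0:ℝ)) * lam i + 0 * 2 ^ ((i : ℕ) + 1) = lam i by ring]
  rw [← hF0eq]
  by_contra hle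
  push_neg at hle
  have hF0ne : F 0 ≠ 0 := hFne 0 (by norm_num)
  have hF0lt : F 0 < 0 := lt_of_le_of_ne hle hF0ne
  obtain ⟨s, hs, hs0⟩ := intermediate_value_Icc (by norm_num : (0:ℝ) ≤ 1)
    hFcont.continuousOn (Set.mem_Icc.mpr ⟨hF0lt.le, hF1.le⟩)
  exact hFne s hs hs0
end

section
/- Let (A,b,c) be a balanced realization of a SISO impulse response g(t) = cA^{t−1}b with pairwise distinct Hankel singular values σ₁ > σ₂ > … > σ_n > 0. Then there exists a diagonal signature matrix S = diag(s₁,…,s_n) with s_i ∈ {−1, +1} such that Aᵀ = SAS and cᵀ = Sb. Moreover, the infinite Hankel matrix H(g) has exactly n nonzero eigenvalues λ₁, …, λ_n, which satisfy |λ_i| = σ_i, and s_i equals the sign of λ_i for each i. -/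
open Matrix

/-- The controllability matrix `[b, Ab, …, A^{n-1}b]` of a SISO pair `(A, b)`. -/
noncomputable def ctrbMatrix {n : ℕ} (A : Matrix (Fin n) (Fin n) ℝ) (b : Fin n → ℝ) :
    Matrix (Fin n) (Fin n) ℝ :=
  Matrix.of fun i j => (A ^ (j : ℕ)).mulVec b i

/-- The observability matrix with rows `c, cA, …, cA^{n-1}` of a SISO pair `(c, A)`. -/
noncomputable def obsvMatrix {n : ℕ} (A : Matrix (Fin n) (Fin n) ℝ) (c : Fin n → ℝ) :
    Matrix (Fin n) (Fin n) ℝ :=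
  Matrix.of fun i j => Matrix.vecMul c (A ^ (i : ℕ)) j

/-- `(A, b, c)` is a balanced realization with Hankel singular values `σ`:
`A` is Schur stable, `(A,b)` is controllable, `(c,A)` is observable, and the
diagonal matrix `Σ = diag σ` with `σ 0 ≥ … ≥ σ (n-1) > 0` satisfies the two
Lyapunov equations `AΣAᵀ - Σ + bbᵀ = 0` and `AᵀΣA - Σ + cᵀc = 0`. -/
def IsBalancedRealization {n : ℕ} (A : Matrix (Fin n) (Fin n) ℝ)
    (b c : Fin n → ℝ) (σ : Fin n → ℝ) : Prop :=
  (∀ μ ∈ spectrum ℂ (A.map (Complex.ofReal ·)), ‖μ‖ < 1) ∧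
  (ctrbMatrix A b).det ≠ 0 ∧
  (obsvMatrix A c).det ≠ 0 ∧
  (∀ i j : Fin n, i ≤ j → σ j ≤ σ i) ∧ (∀ i, 0 < σ i) ∧
  A * Matrix.diagonal σ * Aᵀ - Matrix.diagonal σ + Matrix.vecMulVec b b = 0 ∧
  Aᵀ * Matrix.diagonal σ * A - Matrix.diagonal σ + Matrix.vecMulVec c c = 0

/-- `μ` is an eigenvalue of the infinite Hankel matrix `H(g)` (with
`H(g)_{i,j} = g(i+j)` for `i,j ≥ 0`, i.e. `g t` stands for `g(t+1)`):
there is a nonzero vector `v` with `H(g) v = μ v`. -/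
def IsHankelEigenvalue (g : ℕ → ℝ) (μ : ℝ) : Prop :=
  ∃ v : ℕ → ℝ, v ≠ 0 ∧ (∀ i, Summable fun j => g (i + j) * v j) ∧
    ∀ i, (∑' j, g (i + j) * v j) = μ * v i


section Aux

open Filter Topology
open scoped NNReal ENNReal

section Norms
attribute [local instance] Matrix.linftyOpNormedRing Matrix.linftyOpNormedAlgebra

lemma entry_le_linfty {n : ℕ} (M : Matrix (Fin n) (Fin n) ℂ) (i j : Fin n) :
    ‖M i j‖ ≤ ‖M‖ := by
  rw [Matrix.linfty_opNorm_def]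
  have h1 : ‖M i j‖ ≤ ∑ k, ‖M i k‖ :=
    Finset.single_le_sum (fun k _ => norm_nonneg _) (Finset.mem_univ j)
  have h2 : (∑ k, ‖M i k‖₊ : ℝ≥0) ≤ Finset.univ.sup fun i => ∑ j, ‖M i j‖₊ :=
    Finset.le_sup (f := fun i => ∑ j, ‖M i j‖₊) (Finset.mem_univ i)
  have h3 : (∑ k, ‖M i k‖) = ((∑ k, ‖M i k‖₊ : ℝ≥0) : ℝ) := by push_cast; rfl
  rw [h3] at h1
  exact h1.trans (by exact_mod_cast h2)

lemma schur_pow_bound {n : ℕ} (A : Matrix (Fin n) (Fin n) ℝ)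
    (hA : ∀ μ ∈ spectrum ℂ (A.map (Complex.ofReal ·)), ‖μ‖ < 1) :
    ∃ C r : ℝ, 0 < C ∧ 0 ≤ r ∧ r < 1 ∧ ∀ (k : ℕ) (i j : Fin n), |(A ^ k) i j| ≤ C * r ^ k := by
  rcases Nat.eq_zero_or_pos n with hn | hn
  · subst hn
    exact ⟨1, 0, one_pos, le_refl 0, zero_lt_one, fun k i j => i.elim0⟩
  haveI : Nonempty (Fin n) := ⟨⟨0, hn⟩⟩
  haveI : CompleteSpace (Matrix (Fin n) (Fin n) ℂ) := FiniteDimensional.complete ℂ _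
  set B : Matrix (Fin n) (Fin n) ℂ := (Complex.ofRealHom.mapMatrix A : Matrix (Fin n) (Fin n) ℂ) with hB
  have hAB : ∀ k : ℕ, B ^ k = Complex.ofRealHom.mapMatrix (A ^ k) := fun k => (map_pow _ _ _).symm
  have hspec : ∀ μ ∈ spectrum ℂ B, ‖μ‖₊ < 1 := by
    intro μ hμ
    have : ‖μ‖ < 1 := hA μ hμ
    exact_mod_cast this
  have hnonempty : (spectrum ℂ B).Nonempty := spectrum.nonempty B
  have hsr : spectralRadius ℂ B < (1 : ℝ≥0) :=
    spectrum.spectralRadius_lt_of_forall_lt_of_nonempty hnonempty hspec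
  obtain ⟨ρ, hρ1, hρ2⟩ := ENNReal.lt_iff_exists_nnreal_btwn.mp hsr
  have hρlt1 : (ρ : ℝ) < 1 := by exact_mod_cast hρ2
  have hgel := spectrum.pow_nnnorm_pow_one_div_tendsto_nhds_spectralRadius B
  have hev : ∀ᶠ k : ℕ in atTop, ((‖B ^ k‖₊ : ℝ≥0∞) ^ (1 / k : ℝ)) < (ρ : ℝ≥0∞) :=
    hgel.eventually_lt_const hρ1
  obtain ⟨K, hK⟩ := (hev.and (eventually_ge_atTop 1)).exists_forall_of_atTop
  have hbound : ∀ k, K ≤ k → ‖B ^ k‖ ≤ (ρ : ℝ) ^ k := by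
    intro k hk
    obtain ⟨h1, h2⟩ := hK k hk
    have hkpos : (0 : ℝ) < (k : ℝ) := by exact_mod_cast h2
    have h3 := ENNReal.rpow_lt_rpow h1 hkpos
    rw [← ENNReal.rpow_mul, one_div, inv_mul_cancel₀ hkpos.ne', ENNReal.rpow_one,
      ENNReal.rpow_natCast, ← ENNReal.coe_pow, ENNReal.coe_lt_coe] at h3
    have : ‖B ^ k‖ ≤ ((ρ ^ k : ℝ≥0) : ℝ) := by exact_mod_cast h3.le
    simpa using this
  -- now build a uniform constant
  set r : ℝ := max (ρ : ℝ) (1/2) with hr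
  have hr0 : 0 < r := lt_max_of_lt_right one_half_pos
  have hr1 : r < 1 := max_lt hρlt1 one_half_lt_one
  have hbr : ∀ k, K ≤ k → ‖B ^ k‖ ≤ r ^ k := fun k hk =>
    (hbound k hk).trans (pow_le_pow_left₀ (by positivity) (le_max_left _ _) k)
  set C : ℝ := (∑ k ∈ Finset.range K, ‖B ^ k‖ / r ^ k) + 1 with hC
  have hC1 : (1:ℝ) ≤ C := by
    have : 0 ≤ ∑ k ∈ Finset.range K, ‖B ^ k‖ / r ^ k :=
      Finset.sum_nonneg fun k _ => by positivity
    simp [hC]; linarith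
  have hCb : ∀ k, ‖B ^ k‖ ≤ C * r ^ k := by
    intro k
    rcases lt_or_ge k K with h | h
    · have hterm : ‖B ^ k‖ / r ^ k ≤ ∑ j ∈ Finset.range K, ‖B ^ j‖ / r ^ j :=
        Finset.single_le_sum (f := fun j => ‖B ^ j‖ / r ^ j) (fun j _ => by positivity) (Finset.mem_range.mpr h)
      have : ‖B ^ k‖ / r ^ k ≤ C := by simp only [hC]; linarith
      calc ‖B ^ k‖ = (‖B ^ k‖ / r ^ k) * r ^ k := by field_simp
        _ ≤ C * r ^ k := by
            apply mul_le_mul_of_nonneg_right this (by positivity)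
    · calc ‖B ^ k‖ ≤ r ^ k := hbr k h
        _ ≤ C * r ^ k := by nlinarith [pow_pos hr0 k]
  refine ⟨C, r, by linarith, hr0.le, hr1, fun k i j => ?_⟩
  have he : |(A ^ k) i j| = ‖(B ^ k) i j‖ := by
    rw [hAB k]
    simp [RingHom.mapMatrix_apply, Matrix.map_apply]
  rw [he]
  exact (entry_le_linfty _ i j).trans (hCb k)

end Norms

lemma conj_entry_t {n : ℕ} (M X : Matrix (Fin n) (Fin n) ℝ) (i j : Fin n) :
    (Mᵀ * X * M) i j = ∑ a, ∑ b, M a i * X a b * M b j := by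
  simp only [Matrix.mul_apply, Matrix.transpose_apply, Finset.sum_mul]
  rw [Finset.sum_comm]

lemma conj_entry {n : ℕ} (M X : Matrix (Fin n) (Fin n) ℝ) (i j : Fin n) :
    (M * X * Mᵀ) i j = ∑ a, ∑ b, M i a * X a b * M j b := by
  simp only [Matrix.mul_apply, Matrix.transpose_apply, Finset.sum_mul]
  rw [Finset.sum_comm]

lemma entry_bound_aux {n : ℕ} {D : ℝ} (hD : 0 ≤ D) (Y : Matrix (Fin n) (Fin n) ℝ)
    (f g : Fin n → ℝ) (hf : ∀ a, |f a| ≤ D) (hg : ∀ a, |g a| ≤ D) :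
    |∑ a, ∑ b, f a * Y a b * g b| ≤ D ^ 2 * ∑ a, ∑ b, |Y a b| := by
  calc |∑ a, ∑ b, f a * Y a b * g b| ≤ ∑ a, |∑ b, f a * Y a b * g b| :=
        Finset.abs_sum_le_sum_abs _ _
    _ ≤ ∑ a, ∑ b, |f a * Y a b * g b| :=
        Finset.sum_le_sum fun a _ => Finset.abs_sum_le_sum_abs _ _
    _ ≤ ∑ a, ∑ b, D ^ 2 * |Y a b| := by
        refine Finset.sum_le_sum fun a _ => Finset.sum_le_sum fun b _ => ?_
        rw [abs_mul, abs_mul]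
        have h1 : 0 ≤ |f a| := abs_nonneg _
        have h2 : 0 ≤ |Y a b| := abs_nonneg _
        have h3 : 0 ≤ |g b| := abs_nonneg _
        have h4 : |f a| * |g b| ≤ D * D := mul_le_mul (hf a) (hg b) h3 hD
        have h5 := mul_le_mul_of_nonneg_right h4 h2
        nlinarith [h5]
    _ = D ^ 2 * ∑ a, ∑ b, |Y a b| := by rw [Finset.mul_sum]; simp [Finset.mul_sum]

lemma stein_fixed_zero {n : ℕ} {A X : Matrix (Fin n) (Fin n) ℝ}
    {C r : ℝ} (hC : 0 < C) (hr0 : 0 ≤ r) (hr1 : r < 1)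
    (hd : ∀ (k : ℕ) (i j : Fin n), |(A ^ k) i j| ≤ C * r ^ k)
    (hX : Aᵀ * X * A = X) : X = 0 := by
  have hiter : ∀ k : ℕ, ((A ^ k)ᵀ) * X * (A ^ k) = X := by
    intro k; induction k with
    | zero => simp
    | succ k ih =>
      have : (A ^ (k+1))ᵀ * X * A ^ (k+1) = Aᵀ * ((A ^ k)ᵀ * X * A ^ k) * A := by
        rw [pow_succ, Matrix.transpose_mul]
        simp only [Matrix.mul_assoc]
      rw [this, ih, hX]
  set S := ∑ a, ∑ b, |X a b| with hS
  have key : ∀ (i j : Fin n) (k : ℕ), |X i j| ≤ ((C * r ^ k) ^ 2) * S := by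
    intro i j k
    rw [← hiter k, conj_entry_t]
    exact entry_bound_aux (by positivity) X _ _ (fun a => hd k a i) (fun a => hd k a j)
  ext i j
  have hto : Tendsto (fun k : ℕ => ((C * r ^ k) ^ 2) * S) atTop (𝓝 0) := by
    have h1 : Tendsto (fun k : ℕ => (r ^ 2) ^ k) atTop (𝓝 0) :=
      tendsto_pow_atTop_nhds_zero_of_lt_one (by positivity) (by nlinarith)
    have h2 : (fun k : ℕ => ((C * r ^ k) ^ 2) * S) = fun k => (C ^ 2 * S) * (r ^ 2) ^ k := by
      funext k; ring
    rw [h2]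
    simpa using h1.const_mul (C ^ 2 * S)
  have : |X i j| ≤ 0 := ge_of_tendsto hto (Filter.Eventually.of_forall (key i j))
  have := abs_nonneg (X i j)
  simp only [Matrix.zero_apply]
  linarith [abs_nonneg (X i j), (abs_nonpos_iff).mp ‹|X i j| ≤ 0›]

lemma outer_conj_entry {n : ℕ} (M : Matrix (Fin n) (Fin n) ℝ) (u v : Fin n → ℝ) (a a' : Fin n) :
    (M * Matrix.vecMulVec u v * Mᵀ) a a' = (M.mulVec u a) * (M.mulVec v a') := by
  rw [conj_entry]
  simp only [Matrix.vecMulVec_apply, Matrix.mulVec, dotProduct]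
  rw [Finset.sum_mul_sum]
  exact Finset.sum_congr rfl fun p _ => Finset.sum_congr rfl fun q _ => by ring

lemma mulVec_entry_bound {n : ℕ} {A : Matrix (Fin n) (Fin n) ℝ} {C r : ℝ}
    (hd : ∀ (k : ℕ) (i j : Fin n), |(A ^ k) i j| ≤ C * r ^ k) (b : Fin n → ℝ) :
    ∀ (k : ℕ) (a : Fin n), |(A ^ k).mulVec b a| ≤ (C * ∑ p, |b p|) * r ^ k := by
  intro k a
  calc |(A ^ k).mulVec b a| = |∑ p, (A ^ k) a p * b p| := by
        simp [Matrix.mulVec, dotProduct]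
    _ ≤ ∑ p, |(A ^ k) a p * b p| := Finset.abs_sum_le_sum_abs _ _
    _ ≤ ∑ p, (C * r ^ k) * |b p| := by
        refine Finset.sum_le_sum fun p _ => ?_
        rw [abs_mul]
        exact mul_le_mul_of_nonneg_right (hd k a p) (abs_nonneg _)
    _ = (C * ∑ p, |b p|) * r ^ k := by rw [← Finset.mul_sum]; ring

lemma gramian_telescope {n : ℕ} {A : Matrix (Fin n) (Fin n) ℝ} {b : Fin n → ℝ} {σ : Fin n → ℝ}
    (hL : A * Matrix.diagonal σ * Aᵀ - Matrix.diagonal σ + Matrix.vecMulVec b b = 0) :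
    ∀ N : ℕ, (∑ j ∈ Finset.range N, A ^ j * Matrix.vecMulVec b b * (A ^ j)ᵀ)
      = Matrix.diagonal σ - A ^ N * Matrix.diagonal σ * (A ^ N)ᵀ := by
  have hbb : Matrix.vecMulVec b b = Matrix.diagonal σ - A * Matrix.diagonal σ * Aᵀ := by
    have := hL
    rw [sub_add_eq_add_sub, ← sub_eq_zero.symm] at this
    linear_combination (norm := noncomm_ring) this
  intro N
  induction N with
  | zero => simp
  | succ N ih =>
    rw [Finset.sum_range_succ, ih]
    have : A ^ N * Matrix.vecMulVec b b * (A ^ N)ᵀ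
        = A ^ N * Matrix.diagonal σ * (A ^ N)ᵀ - A ^ (N+1) * Matrix.diagonal σ * (A ^ (N+1))ᵀ := by
      rw [hbb, pow_succ, Matrix.transpose_mul]
      noncomm_ring
    rw [this]
    noncomm_ring

lemma gramian_hasSum {n : ℕ} {A : Matrix (Fin n) (Fin n) ℝ} {b : Fin n → ℝ} {σ : Fin n → ℝ}
    {C r : ℝ} (hC : 0 < C) (hr0 : 0 ≤ r) (hr1 : r < 1)
    (hd : ∀ (k : ℕ) (i j : Fin n), |(A ^ k) i j| ≤ C * r ^ k)
    (hL : A * Matrix.diagonal σ * Aᵀ - Matrix.diagonal σ + Matrix.vecMulVec b b = 0)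
    (a a' : Fin n) :
    HasSum (fun j : ℕ => (A ^ j).mulVec b a * (A ^ j).mulVec b a') (Matrix.diagonal σ a a') := by
  set Cb := C * ∑ p, |b p| with hCb
  have hCb0 : 0 ≤ Cb := by
    have : 0 ≤ ∑ p, |b p| := Finset.sum_nonneg fun p _ => abs_nonneg _
    positivity
  have hq := mulVec_entry_bound hd b
  have hsum : Summable (fun j : ℕ => (A ^ j).mulVec b a * (A ^ j).mulVec b a') := by
    apply Summable.of_norm_bounded (g := fun j => (Cb ^ 2) * (r ^ 2) ^ j)
    · exact (summable_geometric_of_lt_one (by positivity) (by nlinarith)).mul_left _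
    · intro j
      rw [Real.norm_eq_abs, abs_mul]
      calc |(A ^ j).mulVec b a| * |(A ^ j).mulVec b a'| ≤ (Cb * r ^ j) * (Cb * r ^ j) :=
            mul_le_mul (hq j a) (hq j a') (abs_nonneg _) (by positivity)
        _ = Cb ^ 2 * (r ^ 2) ^ j := by ring
  have hpart : ∀ N : ℕ, (∑ j ∈ Finset.range N, (A ^ j).mulVec b a * (A ^ j).mulVec b a')
      = Matrix.diagonal σ a a' - (A ^ N * Matrix.diagonal σ * (A ^ N)ᵀ) a a' := by
    intro N
    have := congrArg (fun M : Matrix (Fin n) (Fin n) ℝ => M a a') (gramian_telescope hL N)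
    simp only [Matrix.sub_apply, Matrix.sum_apply] at this
    rw [← this]
    exact Finset.sum_congr rfl fun j _ => (outer_conj_entry (A ^ j) b b a a').symm
  have hcorr : Tendsto (fun N : ℕ => (A ^ N * Matrix.diagonal σ * (A ^ N)ᵀ) a a') atTop (𝓝 0) := by
    have hb : ∀ N : ℕ, |(A ^ N * Matrix.diagonal σ * (A ^ N)ᵀ) a a'|
        ≤ ((C ^ 2) * ∑ p, ∑ q, |Matrix.diagonal σ p q|) * (r ^ 2) ^ N := by
      intro N
      rw [conj_entry]
      have := entry_bound_aux (D := C * r ^ N) (by positivity) (Matrix.diagonal σ)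
        (fun p => (A ^ N) a p) (fun q => (A ^ N) a' q) (fun p => hd N a p) (fun q => hd N a' q)
      calc |∑ p, ∑ q, (A ^ N) a p * Matrix.diagonal σ p q * (A ^ N) a' q|
          ≤ (C * r ^ N) ^ 2 * ∑ p, ∑ q, |Matrix.diagonal σ p q| := this
        _ = ((C ^ 2) * ∑ p, ∑ q, |Matrix.diagonal σ p q|) * (r ^ 2) ^ N := by ring
    have hgeo : Tendsto (fun N : ℕ => ((C ^ 2) * ∑ p, ∑ q, |Matrix.diagonal σ p q|) * (r ^ 2) ^ N)
        atTop (𝓝 0) := by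
      simpa using (tendsto_pow_atTop_nhds_zero_of_lt_one (by positivity) (by nlinarith)).const_mul
        ((C ^ 2) * ∑ p, ∑ q, |Matrix.diagonal σ p q|)
    refine squeeze_zero_norm (fun N => ?_) hgeo
    exact hb N
  have hlim : Tendsto (fun N : ℕ => ∑ j ∈ Finset.range N, (A ^ j).mulVec b a * (A ^ j).mulVec b a')
      atTop (𝓝 (Matrix.diagonal σ a a')) := by
    simp only [hpart]
    simpa using (tendsto_const_nhds (x := Matrix.diagonal σ a a')).sub hcorr
  have := hsum.hasSum
  have h2 := this.tendsto_sum_nat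
  have : (∑' j, (A ^ j).mulVec b a * (A ^ j).mulVec b a') = Matrix.diagonal σ a a' :=
    tendsto_nhds_unique h2 hlim
  rwa [this] at ‹HasSum _ _›

lemma vecMulVec_conj {n : ℕ} (M : Matrix (Fin n) (Fin n) ℝ) (u v : Fin n → ℝ) :
    Matrix.vecMulVec (M.mulVec u) (M.mulVec v) = M * Matrix.vecMulVec u v * Mᵀ := by
  ext a a'
  rw [outer_conj_entry, Matrix.vecMulVec_apply]

lemma mul_left_right_cancel {n : ℕ} {P Q X Y : Matrix (Fin n) (Fin n) ℝ}
    (hP : IsUnit P.det) (hQ : IsUnit Q.det) (h : P * X * Q = P * Y * Q) : X = Y := by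
  have e : ∀ Z : Matrix (Fin n) (Fin n) ℝ, P⁻¹ * (P * Z * Q) * Q⁻¹ = Z := by
    intro Z
    calc P⁻¹ * (P * Z * Q) * Q⁻¹ = (P⁻¹ * P) * Z * (Q * Q⁻¹) := by noncomm_ring
      _ = Z := by
        rw [Matrix.nonsing_inv_mul _ hP, Matrix.mul_nonsing_inv _ hQ, Matrix.one_mul,
          Matrix.mul_one]
  rw [← e X, ← e Y, h]

lemma part1 {n : ℕ} (hn : 0 < n) (A : Matrix (Fin n) (Fin n) ℝ) (b c σ : Fin n → ℝ)
    {C r : ℝ} (hC : 0 < C) (hr0 : 0 ≤ r) (hr1 : r < 1)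
    (hd : ∀ (k : ℕ) (i j : Fin n), |(A ^ k) i j| ≤ C * r ^ k)
    (hdetC : (ctrbMatrix A b).det ≠ 0) (hdetO : (obsvMatrix A c).det ≠ 0)
    (hσpos : ∀ i, 0 < σ i) (hdist : ∀ i j : Fin n, i ≠ j → σ i ≠ σ j)
    (hL1 : A * Matrix.diagonal σ * Aᵀ - Matrix.diagonal σ + Matrix.vecMulVec b b = 0)
    (hL2 : Aᵀ * Matrix.diagonal σ * A - Matrix.diagonal σ + Matrix.vecMulVec c c = 0) :
    ∃ s : Fin n → ℝ, (∀ i, s i = 1 ∨ s i = -1) ∧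
      Aᵀ = Matrix.diagonal s * A * Matrix.diagonal s ∧ c = (fun i => s i * b i) := by
  set Cm := ctrbMatrix A b with hCm
  set O := obsvMatrix A c with hO
  set Sd := Matrix.diagonal σ with hSd
  have hdCu : IsUnit Cm.det := isUnit_iff_ne_zero.mpr hdetC
  have hdCtu : IsUnit (Cmᵀ).det := by rwa [Matrix.det_transpose]
  have hdOu : IsUnit O.det := isUnit_iff_ne_zero.mpr hdetO
  -- Hankel entries
  have hOC : ∀ i j : Fin n, (O * Cm) i j = c ⬝ᵥ (A ^ ((i : ℕ) + (j : ℕ))).mulVec b := by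
    intro i j
    have h1 : (O * Cm) i j = Matrix.vecMul c (A ^ (i : ℕ)) ⬝ᵥ (A ^ (j : ℕ)).mulVec b := by
      simp [Matrix.mul_apply, hO, hCm, obsvMatrix, ctrbMatrix, dotProduct]
    rw [h1, ← Matrix.dotProduct_mulVec, Matrix.mulVec_mulVec, ← pow_add]
  have hOCs : (O * Cm)ᵀ = O * Cm := by
    ext i j
    rw [Matrix.transpose_apply, hOC, hOC, Nat.add_comm]
  have hOAC : ∀ i j : Fin n, (O * A * Cm) i j = c ⬝ᵥ (A ^ ((i : ℕ) + (j : ℕ) + 1)).mulVec b := by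
    intro i j
    have h1 : ∀ k, (O * A) i k = Matrix.vecMul c (A ^ ((i : ℕ) + 1)) k := by
      intro k
      rw [pow_succ, ← Matrix.vecMul_vecMul]
      simp [Matrix.mul_apply, hO, obsvMatrix, Matrix.vecMul, dotProduct]
    have h2 : (O * A * Cm) i j = Matrix.vecMul c (A ^ ((i : ℕ) + 1)) ⬝ᵥ (A ^ (j : ℕ)).mulVec b := by
      rw [Matrix.mul_apply]
      refine Finset.sum_congr rfl fun k _ => ?_
      rw [h1 k]
      rfl
    rw [h2, ← Matrix.dotProduct_mulVec, Matrix.mulVec_mulVec, ← pow_add]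
    have he : (i : ℕ) + 1 + (j : ℕ) = (i : ℕ) + (j : ℕ) + 1 := by omega
    rw [he]
  have hOACs : (O * A * Cm)ᵀ = O * A * Cm := by
    ext i j
    rw [Matrix.transpose_apply, hOAC, hOAC]
    have he : (j : ℕ) + (i : ℕ) + 1 = (i : ℕ) + (j : ℕ) + 1 := by omega
    rw [he]
  set T := (Cmᵀ)⁻¹ * O with hT
  have hCtT : Cmᵀ * T = O := by
    rw [hT, ← Matrix.mul_assoc, Matrix.mul_nonsing_inv _ hdCtu, Matrix.one_mul]
  have hTC : T * Cm = Oᵀ := by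
    rw [hT, Matrix.mul_assoc]
    have h3 : O * Cm = Cmᵀ * Oᵀ := by rw [← Matrix.transpose_mul, hOCs]
    rw [h3, ← Matrix.mul_assoc, Matrix.nonsing_inv_mul _ hdCtu, Matrix.one_mul]
  have hTsymm : Tᵀ = T := by
    have h4 : Tᵀ = Oᵀ * Cm⁻¹ := by
      rw [hT, Matrix.transpose_mul, Matrix.transpose_nonsing_inv, Matrix.transpose_transpose]
    apply mul_left_right_cancel hdCtu hdCu
    calc Cmᵀ * Tᵀ * Cm = Cmᵀ * Oᵀ * (Cm⁻¹ * Cm) := by rw [h4]; noncomm_ring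
      _ = Cmᵀ * Oᵀ := by rw [Matrix.nonsing_inv_mul _ hdCu, Matrix.mul_one]
      _ = O * Cm := by rw [← Matrix.transpose_mul, hOCs]
      _ = Cmᵀ * T * Cm := by rw [hCtT]
  have hTA : T * A = Aᵀ * T := by
    apply mul_left_right_cancel (P := (1 : Matrix (Fin n) (Fin n) ℝ)) (by simp) hdCu
    simp only [Matrix.one_mul]
    calc T * A * Cm = (Cmᵀ)⁻¹ * (O * A * Cm) := by rw [hT]; noncomm_ring
      _ = (Cmᵀ)⁻¹ * (O * A * Cm)ᵀ := by rw [hOACs]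
      _ = (Cmᵀ)⁻¹ * (Cmᵀ * (Aᵀ * (T * Cm))) := by
          rw [Matrix.transpose_mul, Matrix.transpose_mul, ← hTC]
      _ = Aᵀ * (T * Cm) := by rw [← Matrix.mul_assoc, Matrix.nonsing_inv_mul _ hdCtu,
            Matrix.one_mul]
      _ = Aᵀ * T * Cm := by noncomm_ring
  have hdetT : IsUnit T.det := by
    have h5 : T.det * Cm.det = O.det := by rw [← Matrix.det_mul, hTC, Matrix.det_transpose]
    refine isUnit_iff_ne_zero.mpr fun h0 => hdetO ?_
    rw [← h5, h0, zero_mul]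
  -- T *ᵥ b = c
  set e0 : Fin n → ℝ := Pi.single ⟨0, hn⟩ 1 with he0
  have hCe : Cm.mulVec e0 = b := by
    funext i
    simp [Matrix.mulVec, dotProduct, he0, Pi.single_apply, hCm, ctrbMatrix,
      Matrix.one_apply, Finset.sum_ite_eq]
  have hOe : Oᵀ.mulVec e0 = c := by
    funext i
    simp [Matrix.mulVec, dotProduct, he0, Pi.single_apply, hO, obsvMatrix,
      Matrix.one_apply, Finset.sum_ite_eq]
  have hTb : T.mulVec b = c := by
    rw [← hCe, Matrix.mulVec_mulVec, hTC, hOe]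
  -- T * Sd * T = Sd
  have hA1 : A * Sd * Aᵀ = Sd - Matrix.vecMulVec b b := by
    linear_combination (norm := noncomm_ring) hL1
  have hA2 : Aᵀ * Sd * A = Sd - Matrix.vecMulVec c c := by
    linear_combination (norm := noncomm_ring) hL2
  have hcc : Matrix.vecMulVec c c = T * Matrix.vecMulVec b b * T := by
    rw [← hTb, vecMulVec_conj, hTsymm]
  have hXeq : Aᵀ * (T * Sd * T) * A = T * Sd * T - Matrix.vecMulVec c c := by
    calc Aᵀ * (T * Sd * T) * A = (Aᵀ * T) * Sd * (T * A) := by noncomm_ring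
      _ = (T * A) * Sd * (Aᵀ * T) := by rw [← hTA]
      _ = T * (A * Sd * Aᵀ) * T := by noncomm_ring
      _ = T * (Sd - Matrix.vecMulVec b b) * T := by rw [hA1]
      _ = T * Sd * T - Matrix.vecMulVec c c := by rw [hcc]; noncomm_ring
  have hTT : T * Sd * T = Sd := by
    have hsub : Aᵀ * (T * Sd * T - Sd) * A = T * Sd * T - Sd := by
      calc Aᵀ * (T * Sd * T - Sd) * A = Aᵀ * (T * Sd * T) * A - Aᵀ * Sd * A := by noncomm_ring
        _ = (T * Sd * T - Matrix.vecMulVec c c) - (Sd - Matrix.vecMulVec c c) := by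
            rw [hXeq, hA2]
        _ = T * Sd * T - Sd := by noncomm_ring
    have := stein_fixed_zero hC hr0 hr1 hd hsub
    linear_combination (norm := noncomm_ring) this
  -- T commutes with Sd^2
  have hcomm : T * (Sd * Sd) = (Sd * Sd) * T := by
    calc T * (Sd * Sd) = (T * Sd) * ((T * T⁻¹) * Sd) := by
          rw [Matrix.mul_nonsing_inv _ hdetT]; noncomm_ring
      _ = (T * Sd * T) * (T⁻¹ * Sd) := by noncomm_ring
      _ = Sd * (T⁻¹ * Sd) := by rw [hTT]
      _ = (Sd * T⁻¹) * ((T * Sd * T) * T⁻¹ * T) := by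
          rw [hTT]
          calc Sd * (T⁻¹ * Sd) = (Sd * T⁻¹) * (Sd * (T⁻¹ * T)) := by
                rw [Matrix.nonsing_inv_mul _ hdetT]; noncomm_ring
            _ = (Sd * T⁻¹) * (Sd * T⁻¹ * T) := by noncomm_ring
      _ = (Sd * Sd) * T := by
          calc (Sd * T⁻¹) * ((T * Sd * T) * T⁻¹ * T) = Sd * ((T⁻¹ * T) * Sd * (T * T⁻¹) * T) := by
                noncomm_ring
            _ = (Sd * Sd) * T := by
                rw [Matrix.nonsing_inv_mul _ hdetT, Matrix.mul_nonsing_inv _ hdetT]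
                noncomm_ring
  -- T is diagonal
  have hTdiag : ∀ i j : Fin n, i ≠ j → T i j = 0 := by
    intro i j hij
    have h6 := congrArg (fun M : Matrix (Fin n) (Fin n) ℝ => M i j) hcomm
    simp only [hSd, Matrix.diagonal_mul_diagonal, Matrix.mul_diagonal,
      Matrix.diagonal_mul] at h6
    have h7 : σ i ≠ σ j := hdist i j hij
    have h8 : σ i * σ i ≠ σ j * σ j := by
      have hi := hσpos i; have hj := hσpos j
      rcases lt_or_gt_of_ne h7 with h | h
      · nlinarith
      · nlinarith
    have : T i j * (σ j * σ j) - (σ i * σ i) * T i j = 0 := by rw [h6]; ring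
    rcases mul_eq_zero.mp (by linarith [this] : T i j * (σ j * σ j - σ i * σ i) = 0) with h | h
    · exact h
    · exact absurd (by linarith : σ i * σ i = σ j * σ j) h8
  set s : Fin n → ℝ := fun i => T i i with hs
  have hTds : T = Matrix.diagonal s := by
    ext i j
    by_cases h : i = j
    · subst h; rw [Matrix.diagonal_apply_eq]
    · rw [Matrix.diagonal_apply_ne _ h]
      exact hTdiag i j h
  have hss : ∀ i, s i * s i = 1 := by
    intro i
    have h9 := congrArg (fun M : Matrix (Fin n) (Fin n) ℝ => M i i) hTT
    simp only [hTds, hSd, Matrix.diagonal_mul_diagonal, Matrix.diagonal_apply_eq,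
      Pi.mul_apply] at h9
    have h10 : (s i * s i - 1) * σ i = 0 := by linear_combination h9
    rcases mul_eq_zero.mp h10 with h11 | h11
    · linarith
    · exact absurd h11 (hσpos i).ne'
  have hsone : ∀ i, s i = 1 ∨ s i = -1 := fun i => mul_self_eq_one_iff.mp (hss i)
  have hTT1 : T * T = 1 := by
    rw [hTds, Matrix.diagonal_mul_diagonal]
    have : (fun i => s i * s i) = fun _ => (1 : ℝ) := funext fun i => hss i
    rw [this]
    exact Matrix.diagonal_one
  refine ⟨s, hsone, ?_, ?_⟩
  · rw [← hTds]
    calc Aᵀ = Aᵀ * (T * T) := by rw [hTT1, Matrix.mul_one]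
      _ = (Aᵀ * T) * T := by noncomm_ring
      _ = (T * A) * T := by rw [hTA]
      _ = T * A * T := rfl
  · funext i
    rw [← hTb, hTds]
    simp [Matrix.mulVec_diagonal]

lemma part2 {n : ℕ} (A : Matrix (Fin n) (Fin n) ℝ) (b c σ s : Fin n → ℝ)
    {C r : ℝ} (hC : 0 < C) (hr0 : 0 ≤ r) (hr1 : r < 1)
    (hd : ∀ (k : ℕ) (i j : Fin n), |(A ^ k) i j| ≤ C * r ^ k)
    (hdetO : (obsvMatrix A c).det ≠ 0)
    (hL1 : A * Matrix.diagonal σ * Aᵀ - Matrix.diagonal σ + Matrix.vecMulVec b b = 0)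
    (hsone : ∀ i, s i = 1 ∨ s i = -1)
    (hAT : Aᵀ = Matrix.diagonal s * A * Matrix.diagonal s)
    (hc : c = (fun i => s i * b i)) :
    (∀ i, IsHankelEigenvalue (fun t => c ⬝ᵥ (A ^ t).mulVec b) (s i * σ i)) ∧
    (∀ μ : ℝ, μ ≠ 0 → IsHankelEigenvalue (fun t => c ⬝ᵥ (A ^ t).mulVec b) μ →
      ∃ i, s i * σ i = μ) := by
  set g : ℕ → ℝ := fun t => c ⬝ᵥ (A ^ t).mulVec b with hgdef
  set q : ℕ → Fin n → ℝ := fun j => (A ^ j).mulVec b with hqdef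
  have hss : ∀ i, s i * s i = 1 := by
    intro i; rcases hsone i with h | h <;> rw [h] <;> norm_num
  have hSS : Matrix.diagonal s * Matrix.diagonal s = 1 := by
    rw [Matrix.diagonal_mul_diagonal]
    have : (fun i => s i * s i) = fun _ => (1 : ℝ) := funext fun i => hss i
    rw [this]; exact Matrix.diagonal_one
  have hpowT : ∀ j : ℕ, (A ^ j)ᵀ = Matrix.diagonal s * A ^ j * Matrix.diagonal s := by
    intro j; induction j with
    | zero => simpa using hSS.symm
    | succ j ih =>
      calc (A ^ (j+1))ᵀ = Aᵀ * (A ^ j)ᵀ := by rw [pow_succ, Matrix.transpose_mul]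
        _ = (Matrix.diagonal s * A * Matrix.diagonal s)
              * (Matrix.diagonal s * A ^ j * Matrix.diagonal s) := by rw [hAT, ih]
        _ = Matrix.diagonal s * A * (Matrix.diagonal s * Matrix.diagonal s)
              * A ^ j * Matrix.diagonal s := by noncomm_ring
        _ = Matrix.diagonal s * A ^ (j+1) * Matrix.diagonal s := by
            rw [hSS, Matrix.mul_one, pow_succ']
            noncomm_ring
  have hcb : c = (Matrix.diagonal s).mulVec b := by
    funext i; rw [hc]; simp [Matrix.mulVec_diagonal]
  have ho : ∀ j : ℕ, Matrix.vecMul c (A ^ j) = fun a => s a * q j a := by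
    intro j
    have h1 : Matrix.vecMul c (A ^ j) = ((A ^ j)ᵀ).mulVec c := by
      rw [Matrix.mulVec_transpose]
    rw [h1, hcb, Matrix.mulVec_mulVec, hpowT j, Matrix.mul_assoc, Matrix.mul_assoc, hSS,
      Matrix.mul_one]
    funext a
    rw [← Matrix.mulVec_mulVec]
    simp [Matrix.mulVec_diagonal, hqdef]
  have hg : ∀ i j : ℕ, g (i + j) = ∑ a, (s a * q i a) * q j a := by
    intro i j
    have h1 : g (i + j) = Matrix.vecMul c (A ^ i) ⬝ᵥ (A ^ j).mulVec b := by
      rw [hgdef]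
      show c ⬝ᵥ (A ^ (i+j)).mulVec b = _
      rw [← Matrix.dotProduct_mulVec, pow_add, ← Matrix.mulVec_mulVec]
    rw [h1, ho i]
    rfl
  have hG : ∀ a a', HasSum (fun j : ℕ => q j a * q j a') (Matrix.diagonal σ a a') :=
    fun a a' => gramian_hasSum hC hr0 hr1 hd hL1 a a'
  constructor
  · -- forward direction
    intro i
    refine ⟨fun j => s i * q j i, ?_, ?_, ?_⟩
    · intro h0
      apply hdetO
      apply Matrix.det_eq_zero_of_column_eq_zero i
      intro j
      have h1 : (fun j : ℕ => s i * q j i) (j : ℕ) = 0 := by rw [h0]; rfl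
      show Matrix.vecMul c (A ^ (j : ℕ)) i = 0
      rw [ho (j : ℕ)]
      exact h1
    · intro k
      have hpt : ∀ j : ℕ, g (k + j) * (s i * q j i)
          = ∑ a, (s a * q k a * s i) * (q j a * q j i) := by
        intro j
        rw [hg k j, Finset.sum_mul]
        exact Finset.sum_congr rfl fun a _ => by ring
      have hsm : Summable fun j : ℕ => ∑ a, (s a * q k a * s i) * (q j a * q j i) := by
        apply summable_sum
        intro a _
        exact ((hG a i).summable).mul_left _
      exact hsm.congr fun j => (hpt j).symm
    · intro k
      have hpt : ∀ j : ℕ, g (k + j) * (s i * q j i)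
          = ∑ a, (s a * q k a * s i) * (q j a * q j i) := by
        intro j
        rw [hg k j, Finset.sum_mul]
        exact Finset.sum_congr rfl fun a _ => by ring
      rw [tsum_congr hpt, Summable.tsum_finsetSum (fun a _ => ((hG a i).summable).mul_left _)]
      have h2 : ∀ a, (∑' j : ℕ, (s a * q k a * s i) * (q j a * q j i))
          = (s a * q k a * s i) * Matrix.diagonal σ a i := by
        intro a
        rw [tsum_mul_left, (hG a i).tsum_eq]
      rw [Finset.sum_congr rfl fun a _ => h2 a]
      rw [Finset.sum_eq_single i]
      · rw [Matrix.diagonal_apply_eq]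
        ring
      · intro a _ ha
        rw [Matrix.diagonal_apply_ne _ ha, mul_zero]
      · intro h; exact absurd (Finset.mem_univ i) h
  · -- converse direction
    rintro μ hμ ⟨v, hv0, hvs, hve⟩
    set O := obsvMatrix A c with hO
    have hdOu : IsUnit O.det := isUnit_iff_ne_zero.mpr hdetO
    have hOent : ∀ (i : Fin n) (a : Fin n), O i a = Matrix.vecMul c (A ^ (i : ℕ)) a :=
      fun i a => rfl
    have hgO : ∀ (i : Fin n) (j : ℕ), g ((i : ℕ) + j) = ∑ a, O i a * q j a := by
      intro i j
      rw [hg (i : ℕ) j]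
      refine Finset.sum_congr rfl fun a _ => ?_
      rw [hOent i a, ho (i : ℕ)]
    set u : Fin n → ℕ → ℝ := fun a j => q j a * v j with hu
    have hrepr : ∀ a (j : ℕ), u a j = ∑ i : Fin n, O⁻¹ a i * (g ((i : ℕ) + j) * v j) := by
      intro a j
      have h3 : ∀ i : Fin n, O⁻¹ a i * (g ((i : ℕ) + j) * v j)
          = ∑ a', (O⁻¹ a i * O i a') * (q j a' * v j) := by
        intro i
        rw [hgO i j, Finset.sum_mul, Finset.mul_sum]
        exact Finset.sum_congr rfl fun a' _ => by ring
      rw [Finset.sum_congr rfl fun i _ => h3 i, Finset.sum_comm]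
      have h4 : ∀ a', (∑ i : Fin n, (O⁻¹ a i * O i a') * (q j a' * v j))
          = (O⁻¹ * O) a a' * (q j a' * v j) := by
        intro a'
        rw [Matrix.mul_apply, Finset.sum_mul]
      rw [Finset.sum_congr rfl fun a' _ => h4 a', Matrix.nonsing_inv_mul O hdOu]
      simp [Matrix.one_apply, hu]
    have husum : ∀ a, Summable (u a) := by
      intro a
      have : Summable fun j : ℕ => ∑ i : Fin n, O⁻¹ a i * (g ((i : ℕ) + j) * v j) := by
        apply summable_sum
        intro i _
        exact (hvs (i : ℕ)).mul_left _
      exact this.congr fun j => (hrepr a j).symm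
    set w : Fin n → ℝ := fun a => ∑' j, u a j with hw
    have howi : ∀ i : ℕ, ∑ a, Matrix.vecMul c (A ^ i) a * w a = μ * v i := by
      intro i
      have h5 : ∀ a, Matrix.vecMul c (A ^ i) a * w a
          = ∑' j, Matrix.vecMul c (A ^ i) a * u a j := by
        intro a
        rw [hw]
        exact (tsum_mul_left).symm
      rw [Finset.sum_congr rfl fun a _ => h5 a]
      rw [← Summable.tsum_finsetSum (fun a _ => (husum a).mul_left _)]
      have h6 : ∀ j : ℕ, (∑ a, Matrix.vecMul c (A ^ i) a * u a j) = g (i + j) * v j := by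
        intro j
        rw [ho i, hg i j, Finset.sum_mul]
        exact Finset.sum_congr rfl fun a _ => by ring
      rw [tsum_congr h6]
      exact hve i
    have hwne : w ≠ 0 := by
      intro hw0
      apply hv0
      funext i
      have := howi i
      rw [hw0] at this
      simp at this
      rcases this with h | h
      · exact absurd h hμ
      · exact h
    obtain ⟨a0, ha0⟩ := Function.ne_iff.mp hwne
    refine ⟨a0, ?_⟩
    -- eigen equation for w
    have hkey : ∀ a', μ * w a' = s a' * σ a' * w a' := by
      intro a'
      have hE1 : ∀ j : ℕ, q j a' * (μ * v j) = μ * u a' j := fun j => by rw [hu]; ring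
      have hup : ∀ j : ℕ, q j a' * (μ * v j) = ∑ a, (s a * w a) * (q j a' * q j a) := by
        intro j
        rw [← howi j, Finset.mul_sum]
        refine Finset.sum_congr rfl fun a _ => ?_
        rw [ho j]
        ring
      have hsum2 : Summable fun j : ℕ => q j a' * (μ * v j) :=
        ((husum a').mul_left μ).congr fun j => (hE1 j).symm
      have hts1 : (∑' j, q j a' * (μ * v j)) = μ * w a' := by
        rw [tsum_congr hE1, tsum_mul_left, hw]
      have hts2 : (∑' j, q j a' * (μ * v j)) = ∑ a, (s a * w a) * Matrix.diagonal σ a' a := by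
        rw [tsum_congr hup, Summable.tsum_finsetSum (fun a _ => ((hG a' a).summable).mul_left _)]
        refine Finset.sum_congr rfl fun a _ => ?_
        rw [tsum_mul_left, (hG a' a).tsum_eq]
      rw [← hts1, hts2]
      rw [Finset.sum_eq_single a']
      · rw [Matrix.diagonal_apply_eq]; ring
      · intro a _ ha
        rw [Matrix.diagonal_apply_ne' _ ha, mul_zero]
      · intro h; exact absurd (Finset.mem_univ a') h
    have := hkey a0
    have h7 : (μ - s a0 * σ a0) * w a0 = 0 := by linarith [this]
    rcases mul_eq_zero.mp h7 with h | h
    · linarith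
    · exact absurd h ha0

end Aux

/-- For a balanced SISO realization with pairwise distinct Hankel singular
values there is a signature matrix `S = diag s` with `Aᵀ = SAS` and `cᵀ = Sb`;
moreover the Hankel matrix of `g(t) = cA^{t-1}b` has exactly `n` nonzero
eigenvalues `lam i`, with `|lam i| = σ i` and `s i = sign (lam i)`. -/
theorem balanced_realization_sign_symmetry
    {n : ℕ} (A : Matrix (Fin n) (Fin n) ℝ) (b c : Fin n → ℝ) (σ : Fin n → ℝ)
    (hbal : IsBalancedRealization A b c σ)
    (hdist : ∀ i j : Fin n, i < j → σ j < σ i) :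
    ∃ s : Fin n → ℝ, (∀ i, s i = 1 ∨ s i = -1) ∧
      Aᵀ = Matrix.diagonal s * A * Matrix.diagonal s ∧
      c = (fun i => s i * b i) ∧
      ∃ lam : Fin n → ℝ, Function.Injective lam ∧ (∀ i, lam i ≠ 0) ∧
        (∀ i, IsHankelEigenvalue (fun t => c ⬝ᵥ (A ^ t).mulVec b) (lam i)) ∧
        (∀ μ : ℝ, μ ≠ 0 →
          IsHankelEigenvalue (fun t => c ⬝ᵥ (A ^ t).mulVec b) μ → ∃ i, lam i = μ) ∧
        (∀ i, |lam i| = σ i) ∧ (∀ i, s i = Real.sign (lam i)) := by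
  obtain ⟨hspec, hdetC, hdetO, hmono, hσpos, hL1, hL2⟩ := hbal
  obtain ⟨C, r, hC, hr0, hr1, hd⟩ := schur_pow_bound A hspec
  have hne : ∀ i j : Fin n, i ≠ j → σ i ≠ σ j := by
    intro i j hij
    rcases lt_or_gt_of_ne hij with h | h
    · exact (hdist i j h).ne'
    · exact (hdist j i h).ne
  obtain ⟨s, hsone, hAT, hc⟩ : ∃ s : Fin n → ℝ, (∀ i, s i = 1 ∨ s i = -1) ∧
      Aᵀ = Matrix.diagonal s * A * Matrix.diagonal s ∧ c = (fun i => s i * b i) := by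
    rcases Nat.eq_zero_or_pos n with hn | hn
    · subst hn
      refine ⟨fun _ => 1, fun i => i.elim0, ?_, ?_⟩
      · ext i j; exact i.elim0
      · funext i; exact i.elim0
    · exact part1 hn A b c σ hC hr0 hr1 hd hdetC hdetO hσpos hne hL1 hL2
  obtain ⟨hfwd, hconv⟩ := part2 A b c σ s hC hr0 hr1 hd hdetO hL1 hsone hAT hc
  have habs : ∀ i, |s i * σ i| = σ i := by
    intro i
    rcases hsone i with h | h <;> rw [h]
    · rw [one_mul, abs_of_pos (hσpos i)]
    · rw [neg_one_mul, abs_neg, abs_of_pos (hσpos i)]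
  refine ⟨s, hsone, hAT, hc, fun i => s i * σ i, ?_, ?_, hfwd, hconv, habs, ?_⟩
  · intro i j h
    simp only at h
    have h2 : σ i = σ j := by rw [← habs i, ← habs j, h]
    by_contra hij
    exact hne i j hij h2
  · intro i h0
    simp only at h0
    have := habs i
    rw [h0, abs_zero] at this
    exact absurd this (hσpos i).ne
  · intro i
    simp only
    rcases hsone i with h | h <;> rw [h]
    · rw [one_mul]
      exact (Real.sign_of_pos (hσpos i)).symm
    · rw [neg_one_mul]
      exact (Real.sign_of_neg (by linarith [hσpos i])).symm
end

section
/- If g(t) = Σ_{i=1}^{r} c_i λ_i^{t−1} for all t ≥ 1, where c₁, …, c_r > 0 and λ₁ > λ₂ > … > λ_r > 0, then the Hankel matrix H(g) is totally positive and has rank exactly r; moreover every minor of H(g) of order at most r taken from rows i₁ < … < i_p and columns j₁ < … < j_p is strictly positive. -/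
open Matrix

/-- The square submatrix of the infinite Hankel matrix `H(g)_{i,j} = g(i+j-1)`
(`i,j ≥ 1`) obtained from rows `ρ` and columns `c`.  Here the sequence is
indexed from `0`, i.e. `g t` stands for the value of the impulse response at
time `t + 1`, so that `H(g)` has `(i,j)`-entry `g (i + j)` for `i, j ≥ 0`. -/
def hankelSub (g : ℕ → ℝ) {p : ℕ} (ρ c : Fin p → ℕ) : Matrix (Fin p) (Fin p) ℝ :=
  Matrix.of fun i j => g (ρ i + c j)

/-- The infinite Hankel matrix `H(g)` is totally positive: every minor of every
finite submatrix is nonnegative. -/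
def HankelTotallyPositive (g : ℕ → ℝ) : Prop :=
  ∀ (p : ℕ) (ρ c : Fin p → ℕ), StrictMono ρ → StrictMono c →
    0 ≤ (hankelSub g ρ c).det

/-- The infinite Hankel matrix `H(g)` has rank exactly `r`: all of its finite
submatrices have rank at most `r` and some finite submatrix has rank `r`. -/
def HankelRankEq (g : ℕ → ℝ) (r : ℕ) : Prop :=
  (∀ (p : ℕ) (ρ c : Fin p → ℕ), (hankelSub g ρ c).rank ≤ r) ∧
  (∃ ρ c : Fin r → ℕ, (hankelSub g ρ c).rank = r)

/-!
Factor the `p × p` Hankel minor as `V_ρ · diag(c) · V_κᵀ`, where `V_ρ = (λ_k ^ ρ_i)` is a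
generalized Vandermonde matrix. By Cauchy–Binet its determinant is a sum, over the `p`-subsets
`S` of the nodes, of `∏_{k ∈ S} c_k · det V_ρ[S] · det V_κ[S]`. Generalized Vandermonde
determinants with increasing positive nodes and increasing exponents are positive: they never
vanish, since an exponential sum `∑ aᵢ y ^ tᵢ` with `p` terms has fewer than `p` positive roots
(Rolle), and for exponents `0, …, p - 1` they are classical Vandermonde determinants. Hence the
minors of order `p ≤ r` are positive, while the factorization through `ℝʳ` bounds the rank by `r`,
so the larger minors vanish.
-/

namespace Tuple

variable {α : Type*} [LinearOrder α] {n : ℕ}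

def injectiveEquivStrictMonoProdPerm :
    {f : Fin n → α // f.Injective} ≃ {s : Fin n → α // StrictMono s} × Equiv.Perm (Fin n) where
  toFun f := (⟨f.1 ∘ sort f.1, (monotone_sort f.1).strictMono_of_injective
      (f.2.comp (sort f.1).injective)⟩, (sort f.1)⁻¹)
  invFun sσ := ⟨sσ.1.1 ∘ sσ.2, sσ.1.2.injective.comp sσ.2.injective⟩
  left_inv f := by ext; simp
  right_inv := by
    rintro ⟨⟨s, hs⟩, σ⟩
    have hsort : σ⁻¹ = sort (s ∘ σ) := eq_sort_iff.mpr
      ⟨by simpa [Function.comp_assoc] using hs.monotone,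
       fun i j hij heq => absurd (hs.injective (by simpa using heq)) hij.ne⟩
    ext <;> simp [← hsort]

end Tuple

namespace Matrix

variable {R ι : Type*} [CommRing R] [Fintype ι]

theorem det_mul_eq_sum_prod_det_submatrix {n : Type*} [Fintype n] [DecidableEq n]
    (A : Matrix n ι R) (B : Matrix ι n R) :
    (A * B).det = ∑ f : n → ι, (∏ i, A i (f i)) * (B.submatrix f id).det := by
  have hrows : A * B = of fun i => ∑ k, A i k • B k := by
    ext i j
    simp [mul_apply, Finset.sum_apply]
  have hdet (M : n → n → R) : (of M).det = detRowAlternating.toMultilinearMap M := rfl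
  rw [hrows, hdet, MultilinearMap.map_sum]
  refine Finset.sum_congr rfl fun f _ => ?_
  rw [MultilinearMap.map_smul_univ, smul_eq_mul]
  rfl

open scoped Classical in
theorem det_mul_eq_sum_det_submatrix_strictMono [LinearOrder ι] {p : ℕ}
    (A : Matrix (Fin p) ι R) (B : Matrix ι (Fin p) R) :
    (A * B).det = ∑ s : {s : Fin p → ι // StrictMono s},
      (A.submatrix id s).det * (B.submatrix s id).det := by
  rw [det_mul_eq_sum_prod_det_submatrix, ← Finset.sum_filter_of_ne (p := Function.Injective)]
  swap
  · intro f _ hf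
    by_contra hninj
    obtain ⟨i, j, hfij, hij⟩ := Function.not_injective_iff.mp hninj
    exact hf (by rw [det_zero_of_row_eq hij (by ext k; simp [hfij]), mul_zero])
  rw [Finset.sum_subtype (p := Function.Injective) _ (fun _ => by simp),
    ← Tuple.injectiveEquivStrictMonoProdPerm.symm.sum_comp, Fintype.sum_prod_type]
  refine Finset.sum_congr rfl fun s _ => ?_
  calc ∑ σ : Equiv.Perm (Fin p), (∏ i, A i (s.1 (σ i))) * (B.submatrix (s.1 ∘ σ) id).det
      = ∑ σ : Equiv.Perm (Fin p),
          (Equiv.Perm.sign σ * ∏ i, A i (s.1 (σ i))) * (B.submatrix s id).det := by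
        refine Finset.sum_congr rfl fun σ _ => ?_
        rw [show B.submatrix (s.1 ∘ σ) id = (B.submatrix s id).submatrix σ id from rfl, det_permute]
        ring
    _ = (A.submatrix id s).det * (B.submatrix s id).det := by
        rw [← Finset.sum_mul, ← det_transpose (A.submatrix id s), det_apply' (A.submatrix id s)ᵀ]
        rfl

end Matrix

theorem hasDerivAt_sum_mul_rpow {ι : Type*} [Fintype ι] (a t : ι → ℝ) {y : ℝ} (hy : 0 < y) :
    HasDerivAt (fun y => ∑ i, a i * y ^ t i) (∑ i, a i * (t i * y ^ (t i - 1))) y :=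
  HasDerivAt.fun_sum fun i _ => (Real.hasDerivAt_rpow_const (Or.inl hy.ne')).const_mul (a i)

theorem eq_zero_of_forall_sum_mul_rpow_eq_zero {k : ℕ} (a t x : Fin k → ℝ) (ht : StrictMono t)
    (hx : StrictMono x) (hxpos : ∀ j, 0 < x j) (hroot : ∀ j, ∑ i, a i * x j ^ t i = 0) :
    a = 0 := by
  induction k with
  | zero => exact Subsingleton.elim _ _
  | succ k ih =>
    set F : ℝ → ℝ := fun y => ∑ i, a i * y ^ (t i - t 0)
    have hFroot (j : Fin (k + 1)) : F (x j) = 0 := by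
      have hdiv : F (x j) = (∑ i, a i * x j ^ t i) / x j ^ t 0 := by
        simp only [F, Finset.sum_div, Real.rpow_sub (hxpos j), mul_div_assoc]
      rw [hdiv, hroot j, zero_div]
    have hF' {y : ℝ} (hy : 0 < y) := hasDerivAt_sum_mul_rpow a (fun i => t i - t 0) hy
    -- By Rolle, between consecutive roots of `F = y ^ (-t 0) * ∑ a i * y ^ t i` lies a root of `F'`,
    -- an exponential sum with one term fewer.
    have hcrit (j : Fin k) : ∃ y ∈ Set.Ioo (x j.castSucc) (x j.succ),
        ∑ i, a i * ((t i - t 0) * y ^ (t i - t 0 - 1)) = 0 := by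
      have hlt : x j.castSucc < x j.succ := hx j.castSucc_lt_succ
      exact exists_hasDerivAt_eq_zero hlt
        (fun y hy => (hF' ((hxpos _).trans_le hy.1)).continuousAt.continuousWithinAt)
        ((hFroot _).trans (hFroot _).symm) fun y hy => hF' ((hxpos _).trans hy.1)
    choose y hy hy' using hcrit
    have hy_mono : StrictMono y := fun i j hij =>
      calc y i < x i.succ := (hy i).2
        _ ≤ x j.castSucc := hx.monotone (Fin.succ_le_castSucc_iff.mpr hij)
        _ < y j := (hy j).1
    have htail := ih (fun i => a i.succ * (t i.succ - t 0)) (fun i => t i.succ - t 0 - 1) y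
      (fun i j hij => by simpa using ht (Fin.succ_lt_succ_iff.mpr hij)) hy_mono
      (fun j => (hxpos _).trans (hy j).1) fun j => by
        simpa [Fin.sum_univ_succ, mul_assoc] using hy' j
    have ha_succ (i : Fin k) : a i.succ = 0 := by
      simpa [sub_ne_zero.mpr (ht (Fin.succ_pos i)).ne'] using congrFun htail i
    have ha_zero : a 0 = 0 := by
      simpa [Fin.sum_univ_succ, ha_succ, (Real.rpow_pos_of_pos (hxpos 0) _).ne'] using hroot 0
    funext i
    exact Fin.cases ha_zero ha_succ i

noncomputable def genVandermonde {m n : Type*} (t : m → ℝ) (x : n → ℝ) : Matrix m n ℝ :=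
  of fun i k => x k ^ t i

theorem det_genVandermonde_ne_zero {p : ℕ} {t x : Fin p → ℝ} (ht : StrictMono t)
    (hx : StrictMono x) (hxpos : ∀ j, 0 < x j) : (genVandermonde t x).det ≠ 0 := fun hdet => by
  obtain ⟨a, ha, hvec⟩ := exists_vecMul_eq_zero_iff.mpr hdet
  exact ha (eq_zero_of_forall_sum_mul_rpow_eq_zero a t x ht hx hxpos (congrFun hvec))

theorem convex_setOf_strictMono {ι : Type*} [PartialOrder ι] :
    Convex ℝ {t : ι → ℝ | StrictMono t} := by
  intro t (ht : StrictMono t) u (hu : StrictMono u) a b ha hb hab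
  rcases ha.eq_or_lt with rfl | ha
  · simpa [(by linarith : b = 1)] using hu
  · exact ((ht.const_mul ha).add_monotone (hu.monotone.const_mul hb) :)

theorem det_genVandermonde_pos {p : ℕ} {t x : Fin p → ℝ} (ht : StrictMono t)
    (hx : StrictMono x) (hxpos : ∀ j, 0 < x j) : 0 < (genVandermonde t x).det := by
  -- `D` never vanishes on the connected set of increasing exponent vectors, so it has the sign
  -- it takes at the exponents `0, 1, …, p - 1`, where it is a classical Vandermonde determinant.
  set D : (Fin p → ℝ) → ℝ := fun t => (genVandermonde t x).det
  have hD : Continuous D := by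
    refine Continuous.matrix_det (continuous_pi fun i => continuous_pi fun k => ?_)
    exact (Real.continuous_const_rpow (hxpos k).ne').comp (continuous_apply i)
  have hval : StrictMono fun i : Fin p => (i : ℝ) := fun i j hij => by simpa using hij
  have hD_val : 0 < D fun i => (i : ℝ) := by
    have : genVandermonde (fun i : Fin p => (i : ℝ)) x = (vandermonde x)ᵀ := by
      ext i k
      simp [genVandermonde, vandermonde]
    simp only [D, this, det_transpose, det_vandermonde]
    exact Finset.prod_pos fun i _ => Finset.prod_pos fun j hj =>
      sub_pos.mpr (hx (Finset.mem_Ioi.mp hj))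
  by_contra hneg
  obtain ⟨s, hs, hDs⟩ := convex_setOf_strictMono.isPreconnected.intermediate_value ht hval
    hD.continuousOn ⟨not_lt.mp hneg, hD_val.le⟩
  exact det_genVandermonde_ne_zero hs hx hxpos hDs

section ExponentialSum

variable {ι : Type*} [Fintype ι] [DecidableEq ι] (c lam : ι → ℝ) {g : ℕ → ℝ}

theorem hankelSub_eq_genVandermonde_mul (hg : ∀ t : ℕ, g t = ∑ i, c i * lam i ^ t) {p : ℕ}
    (ρ κ : Fin p → ℕ) :
    hankelSub g ρ κ = genVandermonde (fun i => (ρ i : ℝ)) lam *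
      (diagonal c * (genVandermonde (fun j => (κ j : ℝ)) lam)ᵀ) := by
  ext i j
  rw [mul_apply]
  simp only [hankelSub, genVandermonde, hg, pow_add, of_apply, diagonal_mul, transpose_apply,
    Real.rpow_natCast]
  exact Finset.sum_congr rfl fun k _ => by ring

theorem rank_hankelSub_le (hg : ∀ t : ℕ, g t = ∑ i, c i * lam i ^ t) {p : ℕ}
    (ρ κ : Fin p → ℕ) : (hankelSub g ρ κ).rank ≤ Fintype.card ι := by
  rw [hankelSub_eq_genVandermonde_mul c lam hg]
  exact (rank_mul_le_left _ _).trans (rank_le_card_width _)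

variable [LinearOrder ι]

theorem det_hankelSub_pos (hc : ∀ i, 0 < c i) (hlam : StrictMono lam) (hpos : ∀ i, 0 < lam i)
    (hg : ∀ t : ℕ, g t = ∑ i, c i * lam i ^ t) {p : ℕ} (hp : p ≤ Fintype.card ι)
    {ρ κ : Fin p → ℕ} (hρ : StrictMono ρ) (hκ : StrictMono κ) :
    0 < (hankelSub g ρ κ).det := by
  rw [hankelSub_eq_genVandermonde_mul c lam hg, det_mul_eq_sum_det_submatrix_strictMono]
  have : Nonempty {s : Fin p → ι // StrictMono s} :=
    ⟨⟨monoEquivOfFin ι rfl ∘ Fin.castLE hp,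
      (monoEquivOfFin ι rfl).strictMono.comp (Fin.strictMono_castLE hp)⟩⟩
  refine Finset.sum_pos (fun s _ => mul_pos ?_ ?_) Finset.univ_nonempty
  · exact det_genVandermonde_pos (fun i j hij => by simpa using hρ hij) (hlam.comp s.2)
      fun _ => hpos _
  · have hsub : (diagonal c * (genVandermonde (fun j => (κ j : ℝ)) lam)ᵀ).submatrix s id =
        diagonal (c ∘ s) * (genVandermonde (fun j => (κ j : ℝ)) (lam ∘ s))ᵀ := by
      ext k j
      simp [diagonal_mul, genVandermonde]
    rw [hsub, det_mul, det_diagonal, det_transpose]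
    exact mul_pos (Finset.prod_pos fun _ _ => hc _)
      (det_genVandermonde_pos (fun i j hij => by simpa using hκ hij) (hlam.comp s.2)
        fun _ => hpos _)

theorem hankelTotallyPositive_of_sum_mul_pow (hc : ∀ i, 0 < c i) (hlam : StrictMono lam)
    (hpos : ∀ i, 0 < lam i) (hg : ∀ t : ℕ, g t = ∑ i, c i * lam i ^ t) :
    HankelTotallyPositive g := by
  intro p ρ κ hρ hκ
  rcases le_or_gt p (Fintype.card ι) with hp | hp
  · exact (det_hankelSub_pos c lam hc hlam hpos hg hp hρ hκ).le
  · have hsing : (hankelSub g ρ κ).det = 0 := by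
      by_contra hdet
      have hrank := (rank_of_det_ne_zero hdet).symm.trans_le (rank_hankelSub_le c lam hg ρ κ)
      rw [Fintype.card_fin] at hrank
      omega
    exact hsing.ge

end ExponentialSum

/-- If `g(t) = ∑_{i=1}^r c_i λ_i^{t-1}` with `c_i > 0` and
`λ_1 > λ_2 > … > λ_r > 0` (here `g t` stands for `g(t+1)`), then the Hankel
matrix `H(g)` is totally positive and has rank exactly `r`; moreover all its
minors of order at most `r` are strictly positive. -/
theorem hankel_of_positive_exponential_sum_totally_positive
    (r : ℕ) (c lam : Fin r → ℝ) (hc : ∀ i, 0 < c i)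
    (hlam : StrictAnti lam) (hpos : ∀ i, 0 < lam i)
    (g : ℕ → ℝ) (hg : ∀ t : ℕ, g t = ∑ i, c i * lam i ^ t) :
    HankelTotallyPositive g ∧ HankelRankEq g r ∧
    (∀ p : ℕ, 1 ≤ p → p ≤ r → ∀ ρ κ : Fin p → ℕ, StrictMono ρ → StrictMono κ →
      0 < (hankelSub g ρ κ).det) := by
  -- reversing the order of `Fin r` makes the nodes increasing
  have hlam' : StrictMono (lam ∘ OrderDual.ofDual) := hlam.dual_left
  have hg' : ∀ t : ℕ, g t = ∑ i : (Fin r)ᵒᵈ, c i.ofDual * lam i.ofDual ^ t := hg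
  have hminor {p : ℕ} (hp : p ≤ r) {ρ κ : Fin p → ℕ} (hρ : StrictMono ρ) (hκ : StrictMono κ) :=
    det_hankelSub_pos (ι := (Fin r)ᵒᵈ) _ _ (fun i => hc i.ofDual) hlam' (fun i => hpos i.ofDual)
      hg' (by simpa using hp) hρ hκ
  refine ⟨hankelTotallyPositive_of_sum_mul_pow _ _ (fun i => hc i.ofDual) hlam'
      (fun i => hpos i.ofDual) hg',
    ⟨fun p ρ κ => by simpa using rank_hankelSub_le (ι := (Fin r)ᵒᵈ) _ _ hg' ρ κ,
      Fin.val, Fin.val, ?_⟩, fun p _ hp ρ κ hρ hκ => hminor hp hρ hκ⟩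
  simpa using rank_of_det_ne_zero (hminor le_rfl Fin.val_strictMono Fin.val_strictMono).ne'
end
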